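/- Let {P^(n)}_{n≥0} be a sequence of row-stochastic N×N matrices (entrywise nonnegative with every row summing to 1), and for each n set P̃^(n) := BP^(n)Bᵀ (the unique matrix satisfying BP^(n) = P̃^(n)B). Then the sequence {P^(n)}_{n≥0} is ergodic (i.e., lim_{t→∞} J·P^(t)P^(t−1)⋯P^(0) = 0 with J := I_N − (1/N)11ᵀ) if and only if lim_{t→∞} P̃^(t)P̃^(t−1)⋯P̃^(0) = 0. -/

import Mathlib

open Matrix Filter

noncomputable section

/-- Frobenius norm of a real matrix. -/
def frobNorm {N d : ℕ} (X : Matrix (Fin N) (Fin d) ℝ) : ℝ :=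
  Real.sqrt (∑ i, ∑ j, (X i j) ^ 2)

/-- μ(X) = ‖X − 1γ_X‖_F where γ_X = (1/N)1ᵀX. -/
def gnnMu {N d : ℕ} (X : Matrix (Fin N) (Fin d) ℝ) : ℝ :=
  frobNorm (X - Matrix.of fun _i j => (∑ k, X k j) / N)

/-- Row-stochastic matrix. -/
def rowStochastic {N : ℕ} (P : Matrix (Fin N) (Fin N) ℝ) : Prop :=
  (∀ i j, 0 ≤ P i j) ∧ ∀ i, ∑ j, P i j = 1

/-- The set 𝒫_{G,ε}. -/
def Pset {N : ℕ} (G : SimpleGraph (Fin N)) (ε : ℝ) : Set (Matrix (Fin N) (Fin N) ℝ) :=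
  {P | rowStochastic P ∧ (∀ i j, G.Adj i j → ε ≤ P i j ∧ P i j ≤ 1) ∧
    ∀ i j, ¬ G.Adj i j → P i j = 0}

/-- The set 𝒟 of diagonal matrices with diagonal entries in [0,1]. -/
def Dset (N : ℕ) : Set (Matrix (Fin N) (Fin N) ℝ) :=
  {D | D.IsDiag ∧ ∀ i, 0 ≤ D i i ∧ D i i ≤ 1}

/-- The set 𝒟_δ of diagonal matrices with diagonal entries in [0,δ]. -/
def DsetB (N : ℕ) (δ : ℝ) : Set (Matrix (Fin N) (Fin N) ℝ) :=
  {D | D.IsDiag ∧ ∀ i, 0 ≤ D i i ∧ D i i ≤ δ}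

/-- The set ℳ_{G,ε} = {DP : D ∈ 𝒟, P ∈ 𝒫_{G,ε}}. -/
def Mset {N : ℕ} (G : SimpleGraph (Fin N)) (ε : ℝ) : Set (Matrix (Fin N) (Fin N) ℝ) :=
  {M | ∃ D ∈ Dset N, ∃ P ∈ Pset G ε, M = D * P}

/-- The set ℳ_{G,ε,δ} = {DP : D ∈ 𝒟_δ, P ∈ 𝒫_{G,ε}}. -/
def MsetB {N : ℕ} (G : SimpleGraph (Fin N)) (ε δ : ℝ) : Set (Matrix (Fin N) (Fin N) ℝ) :=
  {M | ∃ D ∈ DsetB N δ, ∃ P ∈ Pset G ε, M = D * P}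

/-- Backward product P^(t) P^(t-1) ⋯ P^(0). -/
def bprod {N : ℕ} (P : ℕ → Matrix (Fin N) (Fin N) ℝ) : ℕ → Matrix (Fin N) (Fin N) ℝ
  | 0 => P 0
  | t + 1 => P (t + 1) * bprod P t

/-- The orthogonal projection J = I − (1/N)11ᵀ onto the complement of span{1}. -/
def projJ (N : ℕ) : Matrix (Fin N) (Fin N) ℝ :=
  1 - (N : ℝ)⁻¹ • Matrix.of fun _ _ => (1 : ℝ)

/-- Matrix ∞-norm: maximum absolute row sum. -/
def infNorm {N : ℕ} (M : Matrix (Fin N) (Fin N) ℝ) : ℝ :=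
  ⨆ i, ∑ j, |M i j|

/-- Forward product of entrywise absolute values |W^(0)||W^(1)|⋯|W^(k)|. -/
def Wabs {d : ℕ} (W : ℕ → Matrix (Fin d) (Fin d) ℝ) : ℕ → Matrix (Fin d) (Fin d) ℝ
  | 0 => (W 0).map (fun x => |x|)
  | k + 1 => Wabs W k * (W (k + 1)).map (fun x => |x|)

/-- Q̂_{t₀, t₀+k} = P^{t₀+k} D^{t₀+k-1} P^{t₀+k-1} ⋯ D^{t₀} P^{t₀}. -/
def Qhat {N : ℕ} (D P : ℕ → Matrix (Fin N) (Fin N) ℝ) (t₀ : ℕ) :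
    ℕ → Matrix (Fin N) (Fin N) ℝ
  | 0 => P t₀
  | k + 1 => P (t₀ + k + 1) * D (t₀ + k) * Qhat D P t₀ k

/-- Q_{0,k} = D^(k) P^(k) ⋯ D^(0) P^(0). -/
def Qprod {N : ℕ} (D P : ℕ → Matrix (Fin N) (Fin N) ℝ) : ℕ → Matrix (Fin N) (Fin N) ℝ
  | 0 => D 0 * P 0
  | k + 1 => D (k + 1) * P (k + 1) * Qprod D P k

/-- P^(m+k) P^(m+k-1) ⋯ P^(m). -/
def PprodFrom {N : ℕ} (P : ℕ → Matrix (Fin N) (Fin N) ℝ) (m : ℕ) :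
    ℕ → Matrix (Fin N) (Fin N) ℝ
  | 0 => P m
  | k + 1 => P (m + k + 1) * PprodFrom P m k

/-- D^(m+k) P^(m+k) ⋯ D^(m) P^(m). -/
def QprodFrom {N : ℕ} (D P : ℕ → Matrix (Fin N) (Fin N) ℝ) (m : ℕ) :
    ℕ → Matrix (Fin N) (Fin N) ℝ
  | 0 => D m * P m
  | k + 1 => D (m + k + 1) * P (m + k + 1) * QprodFrom D P m k

/-- Joint spectral radius of a set of square matrices (w.r.t. the Frobenius norm;
the value is independent of the chosen norm). -/
def JSR {n : ℕ} (A : Set (Matrix (Fin n) (Fin n) ℝ)) : ℝ :=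
  Filter.limsup (fun k : ℕ =>
    sSup {x : ℝ | ∃ M : Fin k → Matrix (Fin n) (Fin n) ℝ,
      (∀ i, M i ∈ A) ∧ x = frobNorm (List.ofFn M).prod ^ (k : ℝ)⁻¹}) Filter.atTop

/-- Spectral radius of a real square matrix: max modulus of its complex eigenvalues. -/
def specRad {n : ℕ} (M : Matrix (Fin n) (Fin n) ℝ) : ℝ :=
  sSup {r : ℝ | ∃ z ∈ spectrum ℂ (M.map Complex.ofReal), r = ‖z‖}

end

/-! The identity `BᵀB = J` gives `BPJ = BP` for row-stochastic `P`, i.e. `BP = P̃B`, hence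
`B·P^(t)⋯P^(0) = P̃^(t)⋯P̃^(0)·B`. Therefore `J·P^(t)⋯P^(0) = Bᵀ(P̃^(t)⋯P̃^(0))B` and
`P̃^(t)⋯P̃^(0) = B(J·P^(t)⋯P^(0))Bᵀ`, and conjugation is continuous in both directions. -/

section

variable {M N : ℕ}

theorem mul_projJ_of_mulVec_one {X : Matrix (Fin M) (Fin N) ℝ}
    (hX : X *ᵥ (fun _ => (1 : ℝ)) = 0) : X * projJ N = X := by
  have hXE : X * (Matrix.of fun _ _ => 1 : Matrix (Fin N) (Fin N) ℝ) = 0 := by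
    ext i j
    simpa [Matrix.mul_apply, Matrix.mulVec, dotProduct] using congrFun hX i
  rw [projJ, Matrix.mul_sub, Matrix.mul_one, Matrix.mul_smul, hXE, smul_zero, sub_zero]

theorem rowStochastic.mulVec_one {P : Matrix (Fin N) (Fin N) ℝ} (hP : rowStochastic P) :
    P *ᵥ (fun _ => (1 : ℝ)) = fun _ => 1 := by
  ext i
  simpa [Matrix.mulVec, dotProduct] using hP.2 i

/-- Completing the rows of `B` by the unit vector `1/√N` gives an orthogonal square matrix
`C`; then `CᵀC = 1` reads `BᵀB + (1/N)11ᵀ = 1`. -/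
theorem transpose_mul_self_eq_projJ {m : Type*} [Fintype m] [DecidableEq m]
    (hm : Fintype.card m + 1 = N) (B : Matrix m (Fin N) ℝ)
    (hB1 : B * Bᵀ = 1) (hB2 : B *ᵥ (fun _ => (1 : ℝ)) = 0) :
    Bᵀ * B = projJ N := by
  have hN : (N : ℝ) ≠ 0 := by exact_mod_cast (by omega : N ≠ 0)
  set s : ℝ := (Real.sqrt N)⁻¹
  have hss : s * s = (N : ℝ)⁻¹ := by
    rw [← mul_inv, Real.mul_self_sqrt (Nat.cast_nonneg N)]
  set u : Matrix (Fin 1) (Fin N) ℝ := Matrix.of fun _ _ => s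
  have hBu : B * uᵀ = 0 := by
    ext i j
    simpa [u, Matrix.mul_apply, ← Finset.sum_mul, Matrix.mulVec, dotProduct]
      using congrArg (· * s) (congrFun hB2 i)
  have huu : u * uᵀ = 1 := by
    ext i j
    rw [Fin.fin_one_eq_zero i, Fin.fin_one_eq_zero j]
    simp [u, Matrix.mul_apply, hss, hN]
  have hCCt : Matrix.fromRows B u * Matrix.fromCols Bᵀ uᵀ = 1 := by
    have huB : u * Bᵀ = 0 := by simpa using congrArg Matrix.transpose hBu
    rw [Matrix.fromRows_mul_fromCols, hB1, hBu, huB, huu, Matrix.fromBlocks_one]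
  have e : Fin N ≃ m ⊕ Fin 1 := Fintype.equivOfCardEq (by simp [hm])
  have hCtC := (Matrix.fromCols_mul_fromRows_eq_one_comm e Bᵀ uᵀ B u).mpr hCCt
  rw [Matrix.fromCols_mul_fromRows] at hCtC
  have huTu : uᵀ * u = (N : ℝ)⁻¹ • Matrix.of fun _ _ => (1 : ℝ) := by
    ext i j
    simp [u, Matrix.mul_apply, hss]
  rw [projJ, ← hCtC, huTu, add_sub_cancel_right]

theorem bprod_intertwine {B : Matrix (Fin M) (Fin N) ℝ}
    {P : ℕ → Matrix (Fin N) (Fin N) ℝ} {Q : ℕ → Matrix (Fin M) (Fin M) ℝ}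
    (h : ∀ n, B * P n = Q n * B) (t : ℕ) : B * bprod P t = bprod Q t * B := by
  induction t with
  | zero => exact h 0
  | succ t ih => rw [bprod, bprod, ← Matrix.mul_assoc, h, Matrix.mul_assoc, ih, Matrix.mul_assoc]

end

theorem tendsto_zero_of_eq_conj {α a b : Type*} [Fintype a] [Fintype b] {l : Filter α}
    {f : α → Matrix a a ℝ} {g : α → Matrix b b ℝ} (U : Matrix b a ℝ) (V : Matrix a b ℝ)
    (hg : ∀ x, g x = U * f x * V) (hf : Tendsto f l (nhds 0)) : Tendsto g l (nhds 0) := by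
  have hc : Continuous fun X : Matrix a a ℝ => U * X * V := by fun_prop
  simpa [Function.comp_def, ← hg] using (hc.tendsto 0).comp hf

/-- a sequence of row-stochastic matrices is ergodic iff the products of
the projected matrices P̃^(n) := BP^(n)Bᵀ converge to zero. -/
theorem stmt_18 (N : ℕ) (hN : 2 ≤ N)
    (B : Matrix (Fin (N - 1)) (Fin N) ℝ)
    (hB1 : B * Bᵀ = 1) (hB2 : B *ᵥ (fun _ => (1 : ℝ)) = 0)
    (P : ℕ → Matrix (Fin N) (Fin N) ℝ) (hP : ∀ n, rowStochastic (P n)) :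
    Tendsto (fun t => projJ N * bprod P t) atTop (nhds 0) ↔
      Tendsto (fun t => bprod (fun n => B * P n * Bᵀ) t) atTop (nhds 0) := by
  have hJ : Bᵀ * B = projJ N :=
    transpose_mul_self_eq_projJ (by simp; omega) B hB1 hB2
  have hBJ : B * projJ N = B := mul_projJ_of_mulVec_one hB2
  have hBP : ∀ n, B * P n = B * P n * Bᵀ * B := fun n => by
    rw [Matrix.mul_assoc _ Bᵀ, hJ, mul_projJ_of_mulVec_one]
    rw [← Matrix.mulVec_mulVec, (hP n).mulVec_one, hB2]
  have hprod := bprod_intertwine hBP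
  have hJX : ∀ t, projJ N * bprod P t = Bᵀ * bprod (fun n => B * P n * Bᵀ) t * B := fun t => by
    rw [← hJ, Matrix.mul_assoc, hprod, Matrix.mul_assoc]
  have hXB : ∀ t, bprod (fun n => B * P n * Bᵀ) t = B * (projJ N * bprod P t) * Bᵀ := fun t => by
    rw [← Matrix.mul_assoc, hBJ, hprod, Matrix.mul_assoc, hB1, Matrix.mul_one]
  exact ⟨tendsto_zero_of_eq_conj B Bᵀ hXB, tendsto_zero_of_eq_conj Bᵀ B hJX⟩
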